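/- For every p ∈ ℕ₀ and every n ∈ ℕ, one has Σ_{m=1}^{n} m^p·H_{m−1}·H_{m−1}(2) = H_n(−p)·H_n·H_n(2) − (B_p/2)·H_n^2 + (D^{(p)}(B) − C^{(p)}_1(n) − (p/2)·B_{p−1})·H_n − (C^{(p)}_0(n) + B_p/2)·H_n(2) + C^{(p)}_{0,1}(n) + C^{(p)}_{1,1}(n) − C^{(p)}_2(n), where the term (p/2)·B_{p−1} is understood to be 0 when p = 0. -/

import Mathlib

/-- Extended multiple harmonic sum `H_n(k_1,…,k_r) = ∑_{n ≥ n_1 > ⋯ > n_r ≥ 1} 1/(n_1^{k_1} ⋯ n_r^{k_r})`,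
with `H_n(∅) = 1`; the exponents may be arbitrary integers.  In particular `Hs n [-(p:ℤ)] = ∑_{m=1}^n m^p`
and `Hs n [1]` is the `n`-th harmonic number. -/
def Hs : ℕ → List ℤ → ℚ
  | _, [] => 1
  | n, k :: ks => ∑ m ∈ Finset.Icc 1 n, ((m : ℚ) ^ k)⁻¹ * Hs (m - 1) ks

/-- The polynomial `C^{(p)}_{a_2,…,a_r}(x)`, where the list `a = [a_1, a_2, …, a_r]` is the *full*
subscript list including the leading `a_1 = 0` (so `Cpoly p [0]` is `C^{(p)}`, `Cpoly p [0,0]`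
is `C^{(p)}_0`, `Cpoly p [0,1,2]` is `C^{(p)}_{1,2}`, …):
`C^{(p)}_{a_2,…,a_r}(x) = ∑_{j_1,…,j_r ≥ 0, j_1+⋯+j_r ≤ p-a_r}
  (∏_{i=1}^r binom(p+1-a_i-j_1-⋯-j_{i-1}, j_i) B_{j_i} / (p+1-a_i-j_1-⋯-j_{i-1}))
    x^{p+1-a_r-j_1-⋯-j_r}`,
the zero polynomial if `p < a_r`, with `B_j = bernoulli' j`. -/
noncomputable def Cpoly (p : ℕ) (a : List ℕ) : Polynomial ℚ :=
  ∑ j ∈ Fintype.piFinset (fun _ : Fin a.length => Finset.range (p + 1)),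
    if (∑ i, j i) + a.getLastD 0 ≤ p then
      Polynomial.C (∏ i : Fin a.length,
        ((p + 1 - a.get i - ∑ i' ∈ Finset.Iio i, j i').choose (j i) : ℚ) * bernoulli' (j i) /
          ((p + 1 - a.get i - ∑ i' ∈ Finset.Iio i, j i' : ℕ) : ℚ)) *
        Polynomial.X ^ (p + 1 - a.getLastD 0 - ∑ i, j i)
    else 0

/-- Umbral evaluation `Q(B)` of a polynomial `Q(x) = ∑_m q_m x^m`: replace `x^m` by the
Bernoulli number `B_m = bernoulli' m` (the convention with `B_1 = +1/2`). -/
noncomputable def umbralB (Q : Polynomial ℚ) : ℚ := Q.sum fun m c => c * bernoulli' m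

open Finset Polynomial

/-! ### Auxiliary definitions -/

noncomputable def cc (p j : ℕ) : ℚ := ((p+1).choose j : ℚ) * bernoulli' j / ((p+1 : ℕ) : ℚ)

noncomputable def F (p : ℕ) : Polynomial ℚ := ∑ j ∈ range (p+1), C (cc p j) * X^(p+1-j)

/-! ### piFinset reindexing -/

set_option linter.unnecessarySeqFocus false in
lemma pi1 {M : Type*} [AddCommMonoid M] (N : ℕ) (g : (Fin 1 → ℕ) → M) :
    ∑ j ∈ Fintype.piFinset (fun _ : Fin 1 => range N), g j = ∑ a ∈ range N, g ![a] := by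
  apply Finset.sum_nbij' (i := fun j => j 0) (j := fun a => ![a]) <;>
      simp [Fintype.mem_piFinset, Fin.forall_fin_one]
  · intros j hj; funext i; fin_cases i <;> simp
  · intros j hj; congr 1; funext i; fin_cases i <;> simp

set_option linter.unnecessarySeqFocus false in
lemma pi2 {M : Type*} [AddCommMonoid M] (N : ℕ) (g : (Fin 2 → ℕ) → M) :
    ∑ j ∈ Fintype.piFinset (fun _ : Fin 2 => range N), g j
      = ∑ a ∈ range N, ∑ b ∈ range N, g ![a, b] := by
  rw [← Finset.sum_product']
  apply Finset.sum_nbij' (i := fun j => (j 0, j 1)) (j := fun a => ![a.1, a.2]) <;>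
      simp [Fintype.mem_piFinset, Fin.forall_fin_two]
  · intros j hj hj2; funext i; fin_cases i <;> simp
  · intros j hj hj2; congr 1; funext i; fin_cases i <;> simp

set_option linter.unnecessarySeqFocus false in
lemma pi3 {M : Type*} [AddCommMonoid M] (N : ℕ) (g : (Fin 3 → ℕ) → M) :
    ∑ j ∈ Fintype.piFinset (fun _ : Fin 3 => range N), g j
      = ∑ a ∈ range N, ∑ b ∈ range N, ∑ c ∈ range N, g ![a, b, c] := by
  rw [← Finset.sum_product', ← Finset.sum_product']
  apply Finset.sum_nbij' (i := fun j => ((j 0, j 1), j 2)) (j := fun a => ![a.1.1, a.1.2, a.2]) <;>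
      simp [Fintype.mem_piFinset, Fin.forall_fin_succ] <;>
    first
      | tauto
      | (intros a _ _ _; funext i; fin_cases i <;> simp)
      | (intros a _ _ _; congr 1; funext i; fin_cases i <;> simp)

lemma Iio10 : (Finset.Iio (0 : Fin 1)) = ∅ := by decide
lemma Iio20 : (Finset.Iio (0 : Fin 2)) = ∅ := by decide
lemma Iio21 : (Finset.Iio (1 : Fin 2)) = {0} := by decide
lemma Iio30 : (Finset.Iio (0 : Fin 3)) = ∅ := by decide
lemma Iio31 : (Finset.Iio (1 : Fin 3)) = {0} := by decide
lemma Iio32 : (Finset.Iio (2 : Fin 3)) = {0, 1} := by decide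

lemma sum_if_le {M : Type*} [AddCommMonoid M] {K N : ℕ} (h : K < N) (t : ℕ → M) :
    ∑ b ∈ range N, (if b ≤ K then t b else 0) = ∑ b ∈ range (K+1), t b := by
  rw [← Finset.sum_subset (Finset.range_subset_range.mpr h)
      (fun b _ hbn => if_neg (by simp at hbn ⊢; omega))]
  exact Finset.sum_congr rfl fun b hb => if_pos (by simp at hb; omega)

/-! ### Structure of `Cpoly` -/

lemma Cpoly_one (p : ℕ) : Cpoly p [0] = F p := by
  rw [Cpoly]
  show ∑ j ∈ Fintype.piFinset (fun _ : Fin 1 => range (p+1)), _ = _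
  rw [pi1]
  apply Finset.sum_congr rfl
  intro a ha
  rw [Finset.mem_range] at ha
  rw [if_pos (by simpa using Nat.lt_succ_iff.mp ha)]
  simp [cc, Fin.sum_univ_one, Fin.prod_univ_one, Iio10, List.get]

lemma Cpoly_two (p q : ℕ) : Cpoly p [0, q]
    = ∑ a ∈ range (p+1), if a + q ≤ p then C (cc p a) * F (p - q - a) else 0 := by
  have e : Cpoly p [0, q] = ∑ j ∈ Fintype.piFinset (fun _ : Fin 2 => Finset.range (p + 1)),
      (if (∑ i, j i) + q ≤ p then
        Polynomial.C (∏ i : Fin 2,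
          ((p + 1 - [0, q].get i - ∑ i' ∈ Finset.Iio i, j i').choose (j i) : ℚ) * bernoulli' (j i) /
            ((p + 1 - [0, q].get i - ∑ i' ∈ Finset.Iio i, j i' : ℕ) : ℚ)) *
          Polynomial.X ^ (p + 1 - q - ∑ i, j i)
      else 0) := rfl
  rw [e, pi2]
  apply Finset.sum_congr rfl
  intro a ha
  rw [Finset.mem_range] at ha
  simp only [Fin.sum_univ_two, Fin.prod_univ_two, Matrix.cons_val_zero, Matrix.cons_val_one,
    Matrix.head_cons, Iio20, Iio21, Finset.sum_empty, Finset.sum_singleton, List.get]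
  by_cases hq : a + q ≤ p
  · rw [if_pos hq, F, Finset.mul_sum, ← sum_if_le (show p - q - a < p + 1 by omega)]
    apply Finset.sum_congr rfl
    intro b _
    by_cases hb : b ≤ p - q - a
    · rw [if_pos (by omega), if_pos hb]
      rw [show p + 1 - q - (a + b) = p - q - a + 1 - b by omega,
        show p + 1 - q - a = p - q - a + 1 by omega]
      simp only [cc, Nat.sub_zero]
      rw [Polynomial.C_mul, mul_assoc]
    · rw [if_neg (by omega), if_neg hb]
  · rw [if_neg hq]
    apply Finset.sum_eq_zero
    intro b _
    rw [if_neg (by omega)]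

lemma Cpoly_three (p q s : ℕ) (hqs : q ≤ s) : Cpoly p [0, q, s]
    = ∑ a ∈ range (p+1), if a + s ≤ p then C (cc p a) * Cpoly (p - q - a) [0, s - q] else 0 := by
  have e : Cpoly p [0, q, s] = ∑ j ∈ Fintype.piFinset (fun _ : Fin 3 => Finset.range (p + 1)),
      (if (∑ i, j i) + s ≤ p then
        Polynomial.C (∏ i : Fin 3,
          ((p + 1 - [0, q, s].get i - ∑ i' ∈ Finset.Iio i, j i').choose (j i) : ℚ) * bernoulli' (j i) /
            ((p + 1 - [0, q, s].get i - ∑ i' ∈ Finset.Iio i, j i' : ℕ) : ℚ)) *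
          Polynomial.X ^ (p + 1 - s - ∑ i, j i)
      else 0) := rfl
  rw [e, pi3]
  apply Finset.sum_congr rfl
  intro a ha
  rw [Finset.mem_range] at ha
  simp only [Fin.sum_univ_three, Fin.prod_univ_three, Matrix.cons_val_zero, Matrix.cons_val_one,
    Matrix.head_cons, Matrix.cons_val_two, Matrix.tail_cons, Iio30, Iio31, Iio32,
    Finset.sum_empty, Finset.sum_singleton, Finset.sum_insert (by decide : (0:Fin 3) ∉ ({1} : Finset (Fin 3))), List.get]
  by_cases has : a + s ≤ p
  · rw [if_pos has, Cpoly_two, Finset.mul_sum,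
      ← sum_if_le (show p - q - a < p + 1 by omega)]
    apply Finset.sum_congr rfl
    intro b _
    by_cases hb : b + (s - q) ≤ p - q - a
    · rw [if_pos (show b ≤ p - q - a by omega), if_pos hb, F, Finset.mul_sum, Finset.mul_sum,
        ← sum_if_le (show p - q - a - (s-q) - b < p + 1 by omega)]
      apply Finset.sum_congr rfl
      intro c _
      by_cases hc : c ≤ p - q - a - (s - q) - b
      · rw [if_pos (by omega), if_pos hc]
        rw [show p + 1 - s - (a + b + c) = p - q - a - (s-q) - b + 1 - c by omega,
          show p + 1 - q - a = p - q - a + 1 by omega,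
          show p + 1 - s - (a + b) = p - q - a - (s-q) - b + 1 by omega]
        simp only [cc, Nat.sub_zero]
        rw [Polynomial.C_mul, Polynomial.C_mul]
        ring
      · rw [if_neg (by omega), if_neg hc]
    · have hz : (∑ c ∈ range (p+1),
          if a + b + c + s ≤ p then
            Polynomial.C
              ((((p + 1 - 0 - 0).choose a : ℚ)) * bernoulli' a / ((p + 1 - 0 - 0 : ℕ) : ℚ) *
                  (((p + 1 - q - a).choose b : ℚ) * bernoulli' b / ((p + 1 - q - a : ℕ) : ℚ)) *
                (((p + 1 - s - (a + b)).choose c : ℚ) * bernoulli' c / ((p + 1 - s - (a + b) : ℕ) : ℚ))) *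
              Polynomial.X ^ (p + 1 - s - (a + b + c))
          else 0) = (0 : Polynomial ℚ) :=
        Finset.sum_eq_zero fun c _ => if_neg (by omega)
      rw [hz, if_neg hb]
      by_cases hb2 : b ≤ p - q - a
      · rw [if_pos hb2, mul_zero]
      · rw [if_neg hb2]
  · rw [if_neg has]
    apply Finset.sum_eq_zero
    intro b _
    apply Finset.sum_eq_zero
    intro c _
    rw [if_neg (by omega)]

/-! ### Evaluation lemmas -/

lemma F_eval (q : ℕ) (x : ℚ) : (F q).eval x = ∑ a ∈ range (q+1), cc q a * x^(q+1-a) := by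
  rw [F, Polynomial.eval_finset_sum]
  simp

lemma eval_two (p q : ℕ) (x : ℚ) : (Cpoly p [0,q]).eval x
    = ∑ a ∈ range (p+1), if a + q ≤ p then cc p a * (F (p - q - a)).eval x else 0 := by
  rw [Cpoly_two, Polynomial.eval_finset_sum]
  apply Finset.sum_congr rfl
  intro a _
  split_ifs <;> simp

lemma eval_three (p q s : ℕ) (hqs : q ≤ s) (x : ℚ) : (Cpoly p [0,q,s]).eval x
    = ∑ a ∈ range (p+1), if a + s ≤ p then cc p a * (Cpoly (p - q - a) [0, s - q]).eval x else 0 := by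
  rw [Cpoly_three p q s hqs, Polynomial.eval_finset_sum]
  apply Finset.sum_congr rfl
  intro a _
  split_ifs <;> simp

/-- Faulhaber -/
lemma F_Icc (q n : ℕ) : (F q).eval (n : ℚ) = ∑ k ∈ Finset.Icc 1 n, (k:ℚ)^q := by
  rw [show Finset.Icc 1 n = Finset.Ico 1 (n+1) from (Finset.Ico_add_one_right_eq_Icc 1 n).symm,
    sum_Ico_pow n q, F_eval]
  apply Finset.sum_congr rfl
  intro a _
  rw [cc]
  push_cast
  ring

lemma F_diff (q n : ℕ) : (F q).eval ((n : ℚ)+1) = (F q).eval (n : ℚ) + ((n:ℚ)+1)^q := by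
  have h1 := F_Icc q (n+1)
  have h2 := F_Icc q n
  rw [Finset.sum_Icc_succ_top (by omega : 1 ≤ n + 1)] at h1
  push_cast at h1
  rw [h1, h2]

lemma F_zero (q : ℕ) : (F q).eval 0 = 0 := by
  have := F_Icc q 0
  simpa using this

lemma cc_self (p : ℕ) : cc p p = bernoulli' p := by
  rw [cc, Nat.choose_succ_self_right]
  field_simp

lemma cc_zero : cc 0 0 = 1 := by norm_num [cc]

lemma F_zero_eval (x : ℚ) : (F 0).eval x = x := by
  rw [F_eval]
  simp [cc_zero]

/-! ### Difference identities -/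

lemma D00 (p n : ℕ) :
    ((Cpoly p [0,0]).eval ((n:ℚ)+1) - (Cpoly p [0,0]).eval (n:ℚ)) * ((n:ℚ)+1)
      = (F p).eval ((n:ℚ)+1) := by
  rw [eval_two, eval_two, ← Finset.sum_sub_distrib, Finset.sum_mul, F_eval]
  apply Finset.sum_congr rfl
  intro a ha
  rw [Finset.mem_range] at ha
  rw [if_pos (by omega), if_pos (by omega), ← mul_sub, F_diff (p-0-a) n,
    show p - 0 - a = p - a by omega, show p + 1 - a = (p - a) + 1 by omega, pow_succ]
  ring

lemma D01 (p n : ℕ) :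
    ((Cpoly p [0,1]).eval ((n:ℚ)+1) - (Cpoly p [0,1]).eval (n:ℚ)) * ((n:ℚ)+1)^2
      = (F p).eval ((n:ℚ)+1) - bernoulli' p * ((n:ℚ)+1) := by
  rw [eval_two, eval_two, ← Finset.sum_sub_distrib, Finset.sum_mul, F_eval]
  have key : ∀ a ∈ range (p+1),
      ((if a + 1 ≤ p then cc p a * (F (p-1-a)).eval ((n:ℚ)+1) else 0)
        - (if a + 1 ≤ p then cc p a * (F (p-1-a)).eval (n:ℚ) else 0)) * ((n:ℚ)+1)^2
      = (if a + 1 ≤ p then cc p a * ((n:ℚ)+1)^(p+1-a) else 0) := by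
    intro a ha
    rw [Finset.mem_range] at ha
    by_cases h : a + 1 ≤ p
    · rw [if_pos h, if_pos h, if_pos h, ← mul_sub, F_diff (p-1-a) n,
        show p + 1 - a = (p - 1 - a) + 2 by omega, pow_add]
      ring
    · rw [if_neg h, if_neg h, if_neg h]
      ring
  rw [Finset.sum_congr rfl key,
    Finset.sum_range_succ (f := fun a => if a + 1 ≤ p then cc p a * ((n:ℚ)+1)^(p+1-a) else 0),
    if_neg (by omega), add_zero,
    Finset.sum_range_succ (f := fun a => cc p a * ((n:ℚ)+1)^(p+1-a)), cc_self,
    show p + 1 - p = 1 by omega, pow_one, add_sub_cancel_right]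
  apply Finset.sum_congr rfl
  intro a ha
  rw [Finset.mem_range] at ha
  rw [if_pos (by omega)]

lemma D02 (p n : ℕ) :
    ((Cpoly p [0,2]).eval ((n:ℚ)+1) - (Cpoly p [0,2]).eval (n:ℚ)) * ((n:ℚ)+1)^3
      = (F p).eval ((n:ℚ)+1) - bernoulli' p * ((n:ℚ)+1)
        - (p : ℚ)/2 * bernoulli' (p-1) * ((n:ℚ)+1)^2 := by
  rcases p with _ | p'
  · simp [eval_two, F_zero_eval]
  · have hcc : cc (p'+1) p' = ((p'+1 : ℕ) : ℚ)/2 * bernoulli' (p'+1-1) := by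
      have h := Nat.choose_symm (show 2 ≤ p'+1+1 by omega)
      rw [show p'+1+1-2 = p' by omega] at h
      rw [cc, h, Nat.cast_choose_two, show p'+1-1 = p' by omega]
      push_cast
      field_simp
      ring
    rw [eval_two, eval_two, ← Finset.sum_sub_distrib, Finset.sum_mul, F_eval]
    have key : ∀ a ∈ range (p'+1+1),
        ((if a + 2 ≤ p'+1 then cc (p'+1) a * (F (p'+1-2-a)).eval ((n:ℚ)+1) else 0)
          - (if a + 2 ≤ p'+1 then cc (p'+1) a * (F (p'+1-2-a)).eval (n:ℚ) else 0)) * ((n:ℚ)+1)^3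
        = (if a + 2 ≤ p'+1 then cc (p'+1) a * ((n:ℚ)+1)^(p'+1+1-a) else 0) := by
      intro a ha
      rw [Finset.mem_range] at ha
      by_cases h : a + 2 ≤ p'+1
      · rw [if_pos h, if_pos h, if_pos h, ← mul_sub, F_diff (p'+1-2-a) n,
          show p'+1 + 1 - a = (p'+1 - 2 - a) + 3 by omega, pow_add]
        ring
      · rw [if_neg h, if_neg h, if_neg h]
        ring
    rw [Finset.sum_congr rfl key,
      Finset.sum_range_succ (f := fun a => if a + 2 ≤ p'+1 then cc (p'+1) a * ((n:ℚ)+1)^(p'+1+1-a) else 0),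
      if_neg (by omega), add_zero,
      Finset.sum_range_succ (f := fun a => if a + 2 ≤ p'+1 then cc (p'+1) a * ((n:ℚ)+1)^(p'+1+1-a) else 0),
      if_neg (by omega), add_zero,
      Finset.sum_range_succ (f := fun a => cc (p'+1) a * ((n:ℚ)+1)^(p'+1+1-a)), cc_self,
      show p'+1+1 - (p'+1) = 1 by omega, pow_one,
      Finset.sum_range_succ (f := fun a => cc (p'+1) a * ((n:ℚ)+1)^(p'+1+1-a)),
      show p'+1+1 - p' = 2 by omega, hcc]
    have congr2 : ∀ a ∈ range p',
        (if a + 2 ≤ p'+1 then cc (p'+1) a * ((n:ℚ)+1)^(p'+1+1-a) else 0)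
          = cc (p'+1) a * ((n:ℚ)+1)^(p'+1+1-a) := by
      intro a ha
      rw [Finset.mem_range] at ha
      rw [if_pos (by omega)]
    rw [Finset.sum_congr rfl congr2]
    ring

lemma D011 (p n : ℕ) :
    ((Cpoly p [0,1,1]).eval ((n:ℚ)+1) - (Cpoly p [0,1,1]).eval (n:ℚ)) * ((n:ℚ)+1)
      = (Cpoly p [0,1]).eval ((n:ℚ)+1) := by
  rw [eval_three p 1 1 le_rfl, eval_three p 1 1 le_rfl, ← Finset.sum_sub_distrib,
    Finset.sum_mul, eval_two]
  apply Finset.sum_congr rfl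
  intro a ha
  rw [Finset.mem_range] at ha
  by_cases h : a + 1 ≤ p
  · rw [if_pos h, if_pos h, if_pos h, ← mul_sub, mul_assoc,
      show (1:ℕ) - 1 = 0 from rfl, D00 (p-1-a) n]
  · rw [if_neg h, if_neg h, if_neg h]
    ring

lemma umbral_eq (p : ℕ) :
    umbralB (Cpoly p [0]).divX = ∑ a ∈ range (p+1), cc p a * bernoulli' (p - a) := by
  rw [Cpoly_one, F]
  rw [← Polynomial.divX_hom_toFun]
  rw [map_sum Polynomial.divX_hom (fun a => C (cc p a) * X^(p+1-a)) (range (p+1))]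
  have h1 : ∀ a ∈ range (p+1),
      Polynomial.divX_hom (C (cc p a) * X^(p+1-a)) = C (cc p a) * X^(p-a) := by
    intro a ha
    rw [Finset.mem_range] at ha
    rw [Polynomial.divX_hom_toFun, Polynomial.divX_C_mul, Polynomial.divX_X_pow,
      if_neg (by omega), show p + 1 - a - 1 = p - a by omega]
  rw [Finset.sum_congr rfl h1]
  have hadd : ∀ Q R : Polynomial ℚ, umbralB (Q + R) = umbralB Q + umbralB R := by
    intro Q R
    exact Polynomial.sum_add_index Q R _ (fun m => zero_mul _) (fun m b c => add_mul b c _)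
  have h2 := map_sum (AddMonoidHom.mk' umbralB hadd) (fun a => C (cc p a) * X^(p-a)) (range (p+1))
  simp only [AddMonoidHom.mk'_apply] at h2
  rw [h2]
  apply Finset.sum_congr rfl
  intro a _
  rw [Polynomial.C_mul_X_pow_eq_monomial, umbralB]
  exact Polynomial.sum_monomial_index _ _ (zero_mul _)

lemma D001 (p n : ℕ) :
    ((Cpoly p [0,0,1]).eval ((n:ℚ)+1) - (Cpoly p [0,0,1]).eval (n:ℚ)) * ((n:ℚ)+1)^2
      = (Cpoly p [0,0]).eval ((n:ℚ)+1) - umbralB (Cpoly p [0]).divX * ((n:ℚ)+1) := by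
  rw [eval_three p 0 1 (by omega), eval_three p 0 1 (by omega), ← Finset.sum_sub_distrib,
    Finset.sum_mul, eval_two, umbral_eq, Finset.sum_mul, ← Finset.sum_sub_distrib]
  have key : ∀ a ∈ range (p+1),
      ((if a + 1 ≤ p then cc p a * (Cpoly (p-0-a) [0, 1-0]).eval ((n:ℚ)+1) else 0)
        - (if a + 1 ≤ p then cc p a * (Cpoly (p-0-a) [0, 1-0]).eval (n:ℚ) else 0)) * ((n:ℚ)+1)^2
      = (if a + 1 ≤ p then cc p a * ((F (p-a)).eval ((n:ℚ)+1) - bernoulli' (p-a) * ((n:ℚ)+1)) else 0) := by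
    intro a ha
    rw [Finset.mem_range] at ha
    by_cases h : a + 1 ≤ p
    · rw [if_pos h, if_pos h, if_pos h, ← mul_sub, mul_assoc,
        show p - 0 - a = p - a from by omega, show (1:ℕ) - 0 = 1 from rfl, D01 (p-a) n]
    · rw [if_neg h, if_neg h, if_neg h]
      ring
  rw [Finset.sum_congr rfl key,
    Finset.sum_range_succ (f := fun a =>
      if a + 1 ≤ p then cc p a * ((F (p-a)).eval ((n:ℚ)+1) - bernoulli' (p-a) * ((n:ℚ)+1)) else 0),
    if_neg (by omega), add_zero,
    Finset.sum_range_succ (f := fun a =>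
      (if a + 0 ≤ p then cc p a * (F (p-0-a)).eval ((n:ℚ)+1) else 0)
        - cc p a * bernoulli' (p-a) * ((n:ℚ)+1))]
  have htop : (if p + 0 ≤ p then cc p p * (F (p-0-p)).eval ((n:ℚ)+1) else 0)
      - cc p p * bernoulli' (p-p) * ((n:ℚ)+1) = 0 := by
    rw [if_pos (by omega), show p - 0 - p = 0 by omega, show p - p = 0 by omega,
      F_zero_eval, bernoulli'_zero]
    ring
  rw [htop, add_zero]
  apply Finset.sum_congr rfl
  intro a ha
  rw [Finset.mem_range] at ha
  rw [if_pos (by omega), if_pos (by omega), show p - 0 - a = p - a from by omega]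
  ring



/-! ### zero evaluations -/

lemma eval_two_zero (p q : ℕ) : (Cpoly p [0,q]).eval 0 = 0 := by
  rw [eval_two]
  apply Finset.sum_eq_zero
  intro a _
  split_ifs with h
  · rw [F_zero, mul_zero]
  · rfl

lemma eval_three_zero (p q s : ℕ) (hqs : q ≤ s) : (Cpoly p [0,q,s]).eval 0 = 0 := by
  rw [eval_three p q s hqs]
  apply Finset.sum_eq_zero
  intro a _
  split_ifs with h
  · rw [eval_two_zero, mul_zero]
  · rfl

/-! ### Hs lemmas -/

lemma Hs_nil (n : ℕ) : Hs n [] = 1 := rfl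

lemma Hs_zero (k : ℤ) (ks : List ℤ) : Hs 0 (k :: ks) = 0 := by
  rw [Hs]
  simp

lemma Icc_top {f : ℕ → ℚ} (n : ℕ) :
    ∑ m ∈ Finset.Icc 1 (n+1), f m = ∑ m ∈ Finset.Icc 1 n, f m + f (n+1) := by
  rw [← Finset.Ico_add_one_right_eq_Icc, Finset.sum_Ico_succ_top (by omega), Finset.Ico_add_one_right_eq_Icc]

lemma Hs_succ (n : ℕ) (k : ℤ) (ks : List ℤ) :
    Hs (n+1) (k :: ks) = Hs n (k :: ks) + (((n:ℚ)+1) ^ k)⁻¹ * Hs n ks := by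
  rw [Hs, Hs, Icc_top]
  push_cast
  norm_num

lemma Hs_one_succ (n : ℕ) : Hs (n+1) [1] = Hs n [1] + ((n:ℚ)+1)⁻¹ := by
  rw [Hs_succ, Hs_nil, zpow_one, mul_one]

lemma Hs_two_succ (n : ℕ) : Hs (n+1) [2] = Hs n [2] + (((n:ℚ)+1)^2)⁻¹ := by
  rw [Hs_succ, Hs_nil, mul_one, show (2:ℤ) = (2:ℕ) from rfl, zpow_natCast]

lemma Hs_neg (p n : ℕ) : Hs n [-(p:ℤ)] = (F p).eval (n:ℚ) := by
  rw [Hs, F_Icc]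
  apply Finset.sum_congr rfl
  intro m _
  rw [Hs_nil, mul_one, zpow_neg, inv_inv, zpow_natCast]

/-! ### Main theorem -/

theorem main_eq (p : ℕ) : ∀ n : ℕ,
    ∑ m ∈ Finset.Icc 1 n, (m : ℚ) ^ p * Hs (m - 1) [1] * Hs (m - 1) [2] =
      Hs n [-(p : ℤ)] * Hs n [1] * Hs n [2] - bernoulli' p / 2 * (Hs n [1]) ^ 2
        + (umbralB (Cpoly p [0]).divX - (Cpoly p [0, 1]).eval (n : ℚ)
            - (p : ℚ) / 2 * bernoulli' (p - 1)) * Hs n [1]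
        - ((Cpoly p [0, 0]).eval (n : ℚ) + bernoulli' p / 2) * Hs n [2]
        + (Cpoly p [0, 0, 1]).eval (n : ℚ) + (Cpoly p [0, 1, 1]).eval (n : ℚ)
        - (Cpoly p [0, 2]).eval (n : ℚ) := by
  intro n
  induction n with
  | zero =>
    rw [show ((0:ℕ):ℚ) = 0 from rfl, eval_two_zero, eval_two_zero, eval_two_zero,
      eval_three_zero p 0 1 (by omega), eval_three_zero p 1 1 le_rfl,
      Hs_zero, Hs_zero, Hs_zero]
    simp
  | succ n IH =>
    have hM : ((n:ℚ)+1) ≠ 0 := by positivity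
    have hM2 : ((n:ℚ)+1)^2 ≠ 0 := pow_ne_zero _ hM
    have hM3 : ((n:ℚ)+1)^3 ≠ 0 := pow_ne_zero _ hM
    have h00 : (Cpoly p [0,0]).eval ((n:ℚ)+1)
        = (Cpoly p [0,0]).eval (n:ℚ) + (F p).eval ((n:ℚ)+1) / ((n:ℚ)+1) := by
      field_simp
      linear_combination D00 p n
    have h01 : (Cpoly p [0,1]).eval ((n:ℚ)+1)
        = (Cpoly p [0,1]).eval (n:ℚ)
          + ((F p).eval ((n:ℚ)+1) - bernoulli' p * ((n:ℚ)+1)) / ((n:ℚ)+1)^2 := by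
      field_simp
      linear_combination D01 p n
    have h02 : (Cpoly p [0,2]).eval ((n:ℚ)+1)
        = (Cpoly p [0,2]).eval (n:ℚ)
          + ((F p).eval ((n:ℚ)+1) - bernoulli' p * ((n:ℚ)+1)
            - (p : ℚ)/2 * bernoulli' (p-1) * ((n:ℚ)+1)^2) / ((n:ℚ)+1)^3 := by
      field_simp
      linear_combination 2 * D02 p n
    have h001 : (Cpoly p [0,0,1]).eval ((n:ℚ)+1)
        = (Cpoly p [0,0,1]).eval (n:ℚ)
          + ((Cpoly p [0,0]).eval ((n:ℚ)+1)
            - umbralB (Cpoly p [0]).divX * ((n:ℚ)+1)) / ((n:ℚ)+1)^2 := by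
      field_simp
      linear_combination D001 p n
    have h011 : (Cpoly p [0,1,1]).eval ((n:ℚ)+1)
        = (Cpoly p [0,1,1]).eval (n:ℚ)
          + (Cpoly p [0,1]).eval ((n:ℚ)+1) / ((n:ℚ)+1) := by
      field_simp
      linear_combination D011 p n
    have hFn : (F p).eval (n:ℚ) = (F p).eval ((n:ℚ)+1) - ((n:ℚ)+1)^p := by
      linarith [F_diff p n]
    rw [Icc_top, IH]
    have hc : ((n+1:ℕ):ℚ) = (n:ℚ)+1 := by push_cast; ring
    rw [show ((n:ℕ)+1) - 1 = n from rfl, hc]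
    rw [Hs_neg p (n+1), Hs_neg p n, Hs_one_succ, Hs_two_succ, hc, hFn]
    rw [h011, h001, h01, h00, h02]
    field_simp
    ring


/-- Theorem 2.7.  For `p ∈ ℕ₀`, `n ∈ ℕ`:
`∑_{m=1}^{n} m^p·H_{m−1}·H_{m−1}(2) = H_n(−p)·H_n·H_n(2) − (B_p/2)·H_n²
  + (D^{(p)}(B) − C^{(p)}_1(n) − (p/2)·B_{p−1})·H_n − (C^{(p)}_0(n) + B_p/2)·H_n(2)
  + C^{(p)}_{0,1}(n) + C^{(p)}_{1,1}(n) − C^{(p)}_2(n)`;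
the factor `(p/2)·B_{p−1}` (encoded with `ℕ`-truncated subtraction) is `0` when `p = 0`
because of the factor `p`. -/
theorem stmt_10 (p : ℕ) (n : ℕ) (hn : 0 < n) :
    ∑ m ∈ Finset.Icc 1 n, (m : ℚ) ^ p * Hs (m - 1) [1] * Hs (m - 1) [2] =
      Hs n [-(p : ℤ)] * Hs n [1] * Hs n [2] - bernoulli' p / 2 * (Hs n [1]) ^ 2
        + (umbralB (Cpoly p [0]).divX - (Cpoly p [0, 1]).eval (n : ℚ)
            - (p : ℚ) / 2 * bernoulli' (p - 1)) * Hs n [1]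
        - ((Cpoly p [0, 0]).eval (n : ℚ) + bernoulli' p / 2) * Hs n [2]
        + (Cpoly p [0, 0, 1]).eval (n : ℚ) + (Cpoly p [0, 1, 1]).eval (n : ℚ)
        - (Cpoly p [0, 2]).eval (n : ℚ) := main_eq p n
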